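/- arXiv:2310.19076 — 3 statements merged into one kernel-verified Lean document; each statement's English description precedes it below -/
import Mathlib

section
/- For every integer c > 4 with 4 dividing c, the ternary quadratic form q(x,y,z) = 4x^2 + 4y^2 + cz^2 + 4yz + 4xz + 4xy has exactly 6 integer representations of 4. -/
theorem stmt_2 (c : ℤ) (hc : 4 < c) (hdvd : 4 ∣ c) :
    {p : ℤ × ℤ × ℤ |
        4*p.1^2 + 4*p.2.1^2 + c*p.2.2^2 + 4*p.2.1*p.2.2 + 4*p.1*p.2.2 + 4*p.1*p.2.1 = 4}.ncard
      = 6 := by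
  have hc8 : 8 ≤ c := by omega
  have hset : {p : ℤ × ℤ × ℤ |
        4*p.1^2 + 4*p.2.1^2 + c*p.2.2^2 + 4*p.2.1*p.2.2 + 4*p.1*p.2.2 + 4*p.1*p.2.1 = 4}
      = ↑(({(1,0,0),(-1,0,0),(0,1,0),(0,-1,0),(1,-1,0),(-1,1,0)} : Finset (ℤ × ℤ × ℤ))) := by
    ext ⟨x, y, z⟩
    simp only [Set.mem_setOf_eq, Finset.coe_insert, Set.mem_insert_iff, Finset.coe_singleton,
      Set.mem_singleton_iff, Prod.mk.injEq]
    constructor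
    · intro h
      have hz : z = 0 := by
        by_contra hz
        have h1 : 1 ≤ z^2 := by
          rcases lt_or_gt_of_ne hz with h' | h' <;> nlinarith
        nlinarith [sq_nonneg (x+y), sq_nonneg (y+z), sq_nonneg (x+z), sq_nonneg z,
          mul_le_mul_of_nonneg_left h1 (by linarith : (0:ℤ) ≤ c - 4)]
      subst hz
      have h2 : x^2 + x*y + y^2 = 1 := by nlinarith
      have hx : -1 ≤ x ∧ x ≤ 1 := by constructor <;> nlinarith [sq_nonneg (x + 2*y)]
      have hy : -1 ≤ y ∧ y ≤ 1 := by constructor <;> nlinarith [sq_nonneg (2*x + y)]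
      obtain ⟨hx1, hx2⟩ := hx
      obtain ⟨hy1, hy2⟩ := hy
      interval_cases x <;> interval_cases y <;> omega
    · rintro (⟨h1,h2,h3⟩|⟨h1,h2,h3⟩|⟨h1,h2,h3⟩|⟨h1,h2,h3⟩|⟨h1,h2,h3⟩|⟨h1,h2,h3⟩) <;>
        subst h1 <;> subst h2 <;> subst h3 <;> ring
  rw [hset, Set.ncard_coe_finset]
  decide
end

section
/- For every integer c > 4 with 4 dividing c, the ternary quadratic form q(x,y,z) = 4x^2 + 4y^2 + cz^2 - 4yz - 4xz has exactly 4 integer representations of 4, namely ±(0,1,0), ±(1,0,0). -/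
theorem stmt_5 (c : ℤ) (hc : 4 < c) (hdvd : 4 ∣ c) :
    ({p : ℤ × ℤ × ℤ |
        4*p.1^2 + 4*p.2.1^2 + c*p.2.2^2 - 4*p.2.1*p.2.2 - 4*p.1*p.2.2 = 4} =
      ({(0,1,0), (0,-1,0), (1,0,0), (-1,0,0)} : Set (ℤ × ℤ × ℤ))) ∧
    {p : ℤ × ℤ × ℤ |
        4*p.1^2 + 4*p.2.1^2 + c*p.2.2^2 - 4*p.2.1*p.2.2 - 4*p.1*p.2.2 = 4}.ncard = 4 := by
  have hc8 : 8 ≤ c := by omega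
  have hset : ({p : ℤ × ℤ × ℤ |
        4*p.1^2 + 4*p.2.1^2 + c*p.2.2^2 - 4*p.2.1*p.2.2 - 4*p.1*p.2.2 = 4} =
      ({(0,1,0), (0,-1,0), (1,0,0), (-1,0,0)} : Set (ℤ × ℤ × ℤ))) := by
    ext ⟨x, y, z⟩
    simp only [Set.mem_setOf_eq, Set.mem_insert_iff, Set.mem_singleton_iff, Prod.mk.injEq]
    constructor
    · intro h
      have h1 : 2*((x-z)^2+(y-z)^2+x^2+y^2) + (c-4)*z^2 = 4 := by linear_combination h
      have hA : (0:ℤ) ≤ (x-z)^2+(y-z)^2+x^2+y^2 := by positivity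
      have hz2 : (c-4)*z^2 ≤ 4 := by linarith
      have hzz : z^2 ≤ 1 := by
        nlinarith [mul_nonneg (by linarith : (0:ℤ) ≤ c - 8) (sq_nonneg z)]
      have hzb : -1 ≤ z ∧ z ≤ 1 := by constructor <;> nlinarith [sq_nonneg (z+1), sq_nonneg (z-1)]
      obtain ⟨hz1, hz2'⟩ := hzb
      interval_cases z
      · exfalso; nlinarith [sq_nonneg (2*x+1), sq_nonneg (2*y+1)]
      · have h' : x^2 + y^2 = 1 := by linarith [h]
        have hx2 : x^2 ≤ 1 := by nlinarith [sq_nonneg y]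
        have hy2 : y^2 ≤ 1 := by nlinarith [sq_nonneg x]
        have hxb : -1 ≤ x ∧ x ≤ 1 := by
          constructor <;> nlinarith [sq_nonneg (x+1), sq_nonneg (x-1)]
        have hyb : -1 ≤ y ∧ y ≤ 1 := by
          constructor <;> nlinarith [sq_nonneg (y+1), sq_nonneg (y-1)]
        obtain ⟨hx1, hx2'⟩ := hxb
        obtain ⟨hy1, hy2'⟩ := hyb
        interval_cases x <;> interval_cases y <;> simp_all
      · exfalso; nlinarith [sq_nonneg (2*x-1), sq_nonneg (2*y-1)]
    · rintro (⟨rfl, rfl, rfl⟩ | ⟨rfl, rfl, rfl⟩ | ⟨rfl, rfl, rfl⟩ | ⟨rfl, rfl, rfl⟩) <;> ring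
  refine ⟨hset, ?_⟩
  rw [hset]
  have : ({(0,1,0), (0,-1,0), (1,0,0), (-1,0,0)} : Set (ℤ × ℤ × ℤ)) =
      (({(0,1,0), (0,-1,0), (1,0,0), (-1,0,0)} : Finset (ℤ × ℤ × ℤ)) : Set (ℤ × ℤ × ℤ)) := by
    simp
  rw [this, Set.ncard_coe_finset]
  decide
end

section
/- Let q(x,y) = ax^2 + txy + by^2 be a positive definite integral binary quadratic form that does not represent the positive integer n, and let f(x,y,z) = ax^2 + by^2 + cz^2 + ryz + sxz + txy be a positive definite integral ternary quadratic form extending q (i.e., f(x,y,0) = q(x,y)) that represents n. Then |disc(f)| ≤ n·|disc(q)|, where disc(q) = t^2 - 4ab and disc(f) = c·(t^2 - 4ab) - q(-r, s) (in suitable normalization); equivalently, c·|disc(q)| - q(-r,s) ≤ n·|disc(q)|. -/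
theorem stmt_7 (a b c r s t n : ℤ) (hn : 0 < n)
    (hqpos : ∀ x y : ℤ, ¬(x = 0 ∧ y = 0) → 0 < a*x^2 + t*x*y + b*y^2)
    (hqnotrep : ¬ ∃ x y : ℤ, a*x^2 + t*x*y + b*y^2 = n)
    (hfpos : ∀ x y z : ℤ, ¬(x = 0 ∧ y = 0 ∧ z = 0) →
      0 < a*x^2 + b*y^2 + c*z^2 + r*y*z + s*x*z + t*x*y)
    (hfrep : ∃ x y z : ℤ, a*x^2 + b*y^2 + c*z^2 + r*y*z + s*x*z + t*x*y = n) :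
    c*(4*a*b - t^2) - (a*r^2 - t*r*s + b*s^2) ≤ n*(4*a*b - t^2) := by
  obtain ⟨x, y, z, hf⟩ := hfrep
  have ha : 0 < a := by
    have := hqpos 1 0 (by norm_num)
    linarith [this]
  have hD : 0 < 4*a*b - t^2 := by
    have h := hqpos t (-(2*a)) (by intro ⟨h1, h2⟩; omega)
    nlinarith [h, ha]
  have hz : z ≠ 0 := by
    intro hz0
    exact hqnotrep ⟨x, y, by rw [hz0] at hf; linarith [hf]⟩
  set Δ : ℤ := c*(4*a*b - t^2) - (a*r^2 - t*r*s + b*s^2) with hΔ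
  by_cases hΔpos : Δ ≤ 0
  · nlinarith [mul_pos hn hD]
  · push_neg at hΔpos
    have hz2 : 1 ≤ z^2 := by
      rcases lt_or_gt_of_ne hz with h | h <;> nlinarith
    have hid : 16*a*(4*a*b - t^2)*n =
        4*(4*a*b - t^2)*(2*a*x + t*y + s*z)^2 +
        (2*(4*a*b - t^2)*y + (4*a*r - 2*s*t)*z)^2 + 16*a*Δ*z^2 := by
      rw [hΔ]
      linear_combination (-16*a*(4*a*b - t^2)) * hf
    have key : 16*a*Δ*z^2 ≤ 16*a*(4*a*b - t^2)*n := by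
      nlinarith [mul_nonneg hD.le (sq_nonneg (2*a*x + t*y + s*z)),
        sq_nonneg (2*(4*a*b - t^2)*y + (4*a*r - 2*s*t)*z), hid]
    nlinarith [key, mul_pos ha hΔpos, hz2, mul_pos (mul_pos ha hΔpos) hz2]
end
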